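/- arXiv:1110.5814 — 2 statements merged into one kernel-verified Lean document; each statement's English description precedes it below -/
import Mathlib

section
/- For r₀ > 0 and a₁, a₂ ∈ ℝ with r₀⁴ ≥ a₁² a₂², define A = 2π² (r₀² + a₁²)(r₀² + a₂²)/r₀ and J_i = π (r₀² + a₁²)(r₀² + a₂²) a_i / (4 r₀²) for i = 1, 2. Then A ≥ 8π √|J₁ J₂|, with equality if and only if r₀² = |a₁ a₂|. -/
/-!
With `P = (r₀² + a₁²)(r₀² + a₂²)`, both sides carry the positive factor `k = 2π² P / r₀²`:
`A = k r₀`, while `J₁ J₂ = c² a₁ a₂` with `8π c = k`, so `8π √|J₁ J₂| = k √|a₁ a₂|`.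
The claim therefore reduces to `√|a₁ a₂| ≤ r₀`, i.e. `|a₁ a₂| ≤ r₀²`, which is exactly the
surface-gravity condition `a₁² a₂² ≤ r₀⁴`.
-/

open Real

lemma abs_mul_le_sq_of_sq_mul_sq_le {a b r : ℝ} (h : a ^ 2 * b ^ 2 ≤ r ^ 4) :
    |a * b| ≤ r ^ 2 :=
  abs_le_of_sq_le_sq (by linarith [mul_pow a b 2, pow_mul r 2 2]) (sq_nonneg r)

lemma sqrt_abs_sq_mul (c x : ℝ) : √|c ^ 2 * x| = |c| * √|x| := by
  rw [abs_mul, abs_of_nonneg (sq_nonneg c), Real.sqrt_mul (sq_nonneg c), Real.sqrt_sq_eq_abs]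

lemma mul_sqrt_le_mul_and_eq_iff {k r x : ℝ} (hk : 0 < k) (hr : 0 ≤ r) (hx : 0 ≤ x)
    (hxr : x ≤ r ^ 2) : k * √x ≤ k * r ∧ (k * r = k * √x ↔ r ^ 2 = x) := by
  refine ⟨mul_le_mul_of_nonneg_left ((Real.sqrt_le_left hr).2 hxr) hk.le, ?_⟩
  rw [mul_right_inj' hk.ne', eq_comm, Real.sqrt_eq_iff_eq_sq hx hr, eq_comm]

/-- area–angular momentum inequality for the 5D Myers–Perry
black hole, with equality exactly in the extremal case `r₀² = |a₁ a₂|`. -/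
theorem stmt_1 (r0 a1 a2 : ℝ) (hr0 : 0 < r0) (hκ : a1 ^ 2 * a2 ^ 2 ≤ r0 ^ 4)
    (A J1 J2 : ℝ)
    (hA : A = 2 * π ^ 2 * (r0 ^ 2 + a1 ^ 2) * (r0 ^ 2 + a2 ^ 2) / r0)
    (hJ1 : J1 = π * (r0 ^ 2 + a1 ^ 2) * (r0 ^ 2 + a2 ^ 2) * a1 / (4 * r0 ^ 2))
    (hJ2 : J2 = π * (r0 ^ 2 + a1 ^ 2) * (r0 ^ 2 + a2 ^ 2) * a2 / (4 * r0 ^ 2)) :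
    A ≥ 8 * π * Real.sqrt |J1 * J2| ∧
      (A = 8 * π * Real.sqrt |J1 * J2| ↔ r0 ^ 2 = |a1 * a2|) := by
  set c := π * (r0 ^ 2 + a1 ^ 2) * (r0 ^ 2 + a2 ^ 2) / (4 * r0 ^ 2) with hc
  set k := 2 * π ^ 2 * (r0 ^ 2 + a1 ^ 2) * (r0 ^ 2 + a2 ^ 2) / r0 ^ 2 with hk
  have hA_eq : A = k * r0 := by rw [hA, hk]; field_simp
  have hJ_eq : 8 * π * √|J1 * J2| = k * √|a1 * a2| := by
    have hJJ : J1 * J2 = c ^ 2 * (a1 * a2) := by rw [hJ1, hJ2]; ring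
    have hck : 8 * π * c = k := by rw [hc, hk]; field_simp; ring
    rw [hJJ, sqrt_abs_sq_mul, abs_of_pos (by positivity : 0 < c), ← hck]
    ring
  rw [ge_iff_le, hA_eq, hJ_eq]
  exact mul_sqrt_le_mul_and_eq_iff (by positivity) hr0.le (abs_nonneg _)
    (abs_mul_le_sq_of_sq_mul_sq_le hκ)
end

section
/- Let c₊, c₋ ∈ ℝ with c₊ ≠ c₋, c₊c₋ ≠ 0, and μ, a₊, a₋ ∈ ℝ^{n-3} with μ·a₊ ≠ 0, μ·a₋ ≠ 0, satisfying the near-horizon constraint c₊²/(μ·a₊) = c₋²/(μ·a₋). Define C₀ = 4c₊²/((c₊ − c₋)(μ·a₊)) (equivalently 4c₋²/((c₊−c₋)(μ·a₋))), J_i = (2π)^{n-3}(c₊ − c₋)μ_i/(16π c₊ c₋), J₊ = J·a₊, J₋ = J·a₋, and A₀ = 2(2π)^{n-3}/C₀. Then A₀ = 8π √|J₊ J₋|. -/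
/-!
Since `J` is a multiple `κ • μ` of `μ`, we get `J₊ J₋ = κ² (μ·a₊)(μ·a₋)`, and the near-horizon
constraint makes `(μ·a₊)(μ·a₋)` the square `(c₋ (μ·a₊) / c₊)²`. Hence `J₊ J₋` is a perfect square,
and substituting `C₀` identifies its square root as `A₀ / 8π`, which is positive because `C₀` is.
-/

open Real Matrix

lemma mul_eq_sq_of_sq_div_eq_sq_div {a b d e : ℝ} (ha : a ≠ 0) (hd : d ≠ 0) (he : e ≠ 0)
    (h : a ^ 2 / d = b ^ 2 / e) : d * e = (b * d / a) ^ 2 := by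
  rw [div_eq_div_iff hd he] at h
  field_simp
  linear_combination h

theorem stmt_11_general (n : ℕ) (cp cm : ℝ)
    (hcne : cp ≠ cm) (hc0 : cp * cm ≠ 0)
    (μ ap am : Fin (n - 3) → ℝ)
    (hap : μ ⬝ᵥ ap ≠ 0) (ham : μ ⬝ᵥ am ≠ 0)
    (hconstr : cp ^ 2 / (μ ⬝ᵥ ap) = cm ^ 2 / (μ ⬝ᵥ am))
    (C0 : ℝ) (hC0 : C0 = 4 * cp ^ 2 / ((cp - cm) * (μ ⬝ᵥ ap)))
    (hC0pos : 0 < C0)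
    (J : Fin (n - 3) → ℝ)
    (hJ : ∀ i, J i = (2 * π) ^ (n - 3) * (cp - cm) * μ i / (16 * π * cp * cm))
    (Jp Jm A0 : ℝ) (hJp : Jp = J ⬝ᵥ ap) (hJm : Jm = J ⬝ᵥ am)
    (hA0 : A0 = 2 * (2 * π) ^ (n - 3) / C0) :
    A0 = 8 * π * Real.sqrt |Jp * Jm| := by
  obtain ⟨hcp, hcm⟩ := mul_ne_zero_iff.mp hc0
  set K := (2 * π) ^ (n - 3)
  set κ := K * (cp - cm) / (16 * π * cp * cm) with hκ
  have hJκ : J = κ • μ := funext fun i => by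
    rw [hJ i, Pi.smul_apply, smul_eq_mul]
    ring
  have hJpJm : Jp * Jm = (A0 / (8 * π)) ^ 2 := by
    have hde := mul_eq_sq_of_sq_div_eq_sq_div hcp hap ham hconstr
    calc Jp * Jm = κ ^ 2 * ((μ ⬝ᵥ ap) * (μ ⬝ᵥ am)) := by
          rw [hJp, hJm, hJκ, smul_dotProduct, smul_dotProduct, smul_eq_mul, smul_eq_mul]
          ring
      _ = (A0 / (8 * π)) ^ 2 := by
          have hcpcm : cp - cm ≠ 0 := sub_ne_zero.mpr hcne
          rw [hde, hA0, hC0, hκ]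
          field_simp
          ring
  have hA0pos : 0 < A0 := hA0 ▸ by positivity
  rw [hJpJm, abs_sq, Real.sqrt_sq (by positivity)]
  field_simp

/-- the near-horizon geometry parameter relations imply that the
area saturates the area–angular momentum bound: `A₀ = 8π√|J₊J₋|`. -/
theorem stmt_11 (n : ℕ) (hn : 4 ≤ n) (cp cm : ℝ)
    (hcne : cp ≠ cm) (hc0 : cp * cm ≠ 0)
    (μ ap am : Fin (n - 3) → ℝ)
    (hap : μ ⬝ᵥ ap ≠ 0) (ham : μ ⬝ᵥ am ≠ 0)
    (hconstr : cp ^ 2 / (μ ⬝ᵥ ap) = cm ^ 2 / (μ ⬝ᵥ am))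
    (C0 : ℝ) (hC0 : C0 = 4 * cp ^ 2 / ((cp - cm) * (μ ⬝ᵥ ap)))
    (hC0pos : 0 < C0)
    (J : Fin (n - 3) → ℝ)
    (hJ : ∀ i, J i = (2 * π) ^ (n - 3) * (cp - cm) * μ i / (16 * π * cp * cm))
    (Jp Jm A0 : ℝ) (hJp : Jp = J ⬝ᵥ ap) (hJm : Jm = J ⬝ᵥ am)
    (hA0 : A0 = 2 * (2 * π) ^ (n - 3) / C0) :
    A0 = 8 * π * Real.sqrt |Jp * Jm| :=
  stmt_11_general n cp cm hcne hc0 μ ap am hap ham hconstr C0 hC0 hC0pos J hJ Jp Jm A0 hJp hJm hA0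
end
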